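/- arXiv:1710.10517 — 4 statements merged into one kernel-verified Lean document; each statement's English description precedes it below -/
import Mathlib

section
/- There exists a constant C > 0 such that for all real x ≥ 2, |∑_{n ≤ x} φ(n) − 3x²/π²| ≤ C·x·log x. -/
/-!
Since `φ = μ * id`, we have `∑_{n ≤ x} φ(n) = ∑_{d ≤ x} μ(d) ∑_{q ≤ x/d} q`, and the inner sum is
`(x/d)²/2 + O(x/d)`. The errors add up to `O(x · H_⌊x⌋) = O(x log x)`, while the main term is
`x²/2 · ∑_{d ≤ x} μ(d)/d² = x²/2 · (1/ζ(2) + O(1/x)) = 3x²/π² + O(x)`.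
-/

open Finset Real
open ArithmeticFunction hiding log
open scoped LSeries.notation ArithmeticFunction.Moebius

theorem moebius_mul_id_eq_totient {R : Type*} [Ring R] (n : ℕ) :
    ((μ : ArithmeticFunction R) * (ArithmeticFunction.id : ArithmeticFunction R)) n =
      n.totient := by
  rcases n.eq_zero_or_pos with rfl | hn
  · simp
  rw [mul_apply]
  refine sum_eq_iff_sum_mul_moebius_eq (f := fun n => (n.totient : R)) (g := (↑)) |>.mp
    (fun m _ => ?_) n hn
  rw [← Nat.cast_sum, Nat.sum_totient]

theorem sum_Icc_totient_eq {R : Type*} [Ring R] (N : ℕ) :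
    ∑ n ∈ Icc 1 N, (n.totient : R) = ∑ d ∈ Icc 1 N, μ d * ∑ q ∈ Icc 1 (N / d), (q : R) := by
  have hIcc (M : ℕ) : Icc 1 M = Ioc 0 M := Icc_add_one_left_eq_Ioc 0 M
  simp_rw [hIcc, ← moebius_mul_id_eq_totient, sum_Ioc_mul_eq_sum_sum]
  simp

theorem abs_moebius_cast_le_one {R : Type*} [Ring R] [LinearOrder R] [IsStrictOrderedRing R]
    (n : ℕ) : |(μ n : R)| ≤ 1 := by
  exact_mod_cast abs_moebius_le_one

theorem sum_Icc_natCast_eq (m : ℕ) : ∑ q ∈ Icc 1 m, (q : ℝ) = m * (m + 1) / 2 := by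
  induction m with
  | zero => simp
  | succ m ih =>
    rw [sum_Icc_succ_top (by omega), ih]
    push_cast
    ring

noncomputable def triangularError (t : ℝ) : ℝ := ∑ q ∈ Icc 1 ⌊t⌋₊, (q : ℝ) - t ^ 2 / 2

theorem abs_triangularError_le {t : ℝ} (ht : 0 ≤ t) : |triangularError t| ≤ t / 2 := by
  have h₁ : (⌊t⌋₊ : ℝ) ≤ t := Nat.floor_le ht
  have h₂ : t < ⌊t⌋₊ + 1 := Nat.lt_floor_add_one t
  rw [triangularError, sum_Icc_natCast_eq, abs_le]
  constructor <;> nlinarith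

theorem summable_inv_sq_nat_add (k : ℕ) : Summable fun i : ℕ => (((i + k : ℕ) : ℝ) ^ 2)⁻¹ :=
  (summable_nat_add_iff k).mpr (Real.summable_nat_pow_inv.mpr one_lt_two)

theorem tsum_inv_sq_nat_add_le (N : ℕ) :
    ∑' i : ℕ, (((i + (N + 1) : ℕ) : ℝ) ^ 2)⁻¹ ≤ 2 / ((N : ℝ) + 1) := by
  refine Real.tsum_le_of_sum_range_le (fun _ => by positivity) fun n => ?_
  calc ∑ i ∈ range n, (((i + (N + 1) : ℕ) : ℝ) ^ 2)⁻¹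
      = ∑ i ∈ Ioo N (N + 1 + n), ((i : ℝ) ^ 2)⁻¹ := by
        rw [← Ico_add_one_left_eq_Ioo, sum_Ico_eq_sum_range, Nat.add_sub_cancel_left]
        simp only [add_comm]
    _ ≤ 2 / ((N : ℝ) + 1) := sum_Ioo_inv_sq_le N _

theorem abs_tsum_sub_sum_Icc_le_of_abs_le_inv_sq {f : ℕ → ℝ}
    (hf : ∀ n, |f n| ≤ ((n : ℝ) ^ 2)⁻¹) (N : ℕ) :
    |∑' n, f n - ∑ n ∈ Icc 1 N, f n| ≤ 2 / ((N : ℝ) + 1) := by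
  have hf₀ : f 0 = 0 := abs_nonpos_iff.mp (by simpa using hf 0)
  have hsum : Summable f := (summable_inv_sq_nat_add 0).of_norm_bounded (by simpa using hf)
  have hhead : ∑ n ∈ range (N + 1), f n = ∑ n ∈ Icc 1 N, f n := by
    rw [range_eq_Ico, sum_eq_sum_Ico_succ_bot N.succ_pos, hf₀, zero_add, Nat.succ_eq_add_one,
      Ico_add_one_right_eq_Icc]
  rw [← hhead, ← hsum.sum_add_tsum_nat_add (N + 1), add_sub_cancel_left]
  calc ‖∑' i, f (i + (N + 1))‖ ≤ ∑' i : ℕ, (((i + (N + 1) : ℕ) : ℝ) ^ 2)⁻¹ :=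
        tsum_of_norm_bounded (summable_inv_sq_nat_add _).hasSum fun i => hf (i + (N + 1))
    _ ≤ 2 / ((N : ℝ) + 1) := tsum_inv_sq_nat_add_le N

theorem LSeries_moebius_two : L ↗μ 2 = 6 / (π : ℂ) ^ 2 := by
  have h := LSeries_zeta_mul_Lseries_moebius (s := 2) (by norm_num)
  rw [LSeries_zeta_eq_riemannZeta (by norm_num), riemannZeta_two] at h
  rw [eq_div_iff (by simp [pi_ne_zero])]
  linear_combination 6 * h

theorem hasSum_moebius_div_sq : HasSum (fun n : ℕ => (μ n : ℝ) / n ^ 2) (6 / π ^ 2) := by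
  rw [← Complex.hasSum_ofReal]
  convert (show HasSum (LSeries.term ↗μ 2) (L ↗μ 2) from
    (LSeriesSummable_moebius_iff.mpr (show 1 < (2 : ℂ).re by norm_num)).LSeriesHasSum) using 1
  · ext n
    rcases n.eq_zero_or_pos with rfl | hn
    · simp
    rw [LSeries.term_of_ne_zero hn.ne']
    push_cast
    norm_num
  · rw [LSeries_moebius_two]
    push_cast
    rfl

theorem abs_sum_Icc_moebius_div_sq_sub_le (N : ℕ) :
    |∑ d ∈ Icc 1 N, (μ d : ℝ) / d ^ 2 - 6 / π ^ 2| ≤ 2 / ((N : ℝ) + 1) := by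
  rw [abs_sub_comm, ← hasSum_moebius_div_sq.tsum_eq]
  refine abs_tsum_sub_sum_Icc_le_of_abs_le_inv_sq (fun n => ?_) N
  rw [abs_div, abs_of_nonneg (by positivity : (0 : ℝ) ≤ n ^ 2), div_eq_mul_inv]
  exact mul_le_of_le_one_left (by positivity) (abs_moebius_cast_le_one n)

theorem sum_Icc_totient_sub_eq (x : ℝ) :
    ∑ n ∈ Icc 1 ⌊x⌋₊, (n.totient : ℝ) - 3 * x ^ 2 / π ^ 2 =
      ∑ d ∈ Icc 1 ⌊x⌋₊, μ d * triangularError (x / d) +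
        x ^ 2 / 2 * (∑ d ∈ Icc 1 ⌊x⌋₊, (μ d : ℝ) / d ^ 2 - 6 / π ^ 2) := by
  have h (d : ℕ) : (μ d : ℝ) * ((x / d) ^ 2 / 2) = x ^ 2 / 2 * (μ d / d ^ 2) := by ring
  simp only [sum_Icc_totient_eq, triangularError, Nat.floor_div_natCast, mul_sub,
    sum_sub_distrib, h, ← mul_sum]
  ring

theorem abs_sum_Icc_moebius_mul_triangularError_le {x : ℝ} (hx : 1 ≤ x) :
    |∑ d ∈ Icc 1 ⌊x⌋₊, μ d * triangularError (x / d)| ≤ x / 2 * (1 + log x) :=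
  calc _ ≤ ∑ d ∈ Icc 1 ⌊x⌋₊, |μ d * triangularError (x / d)| := abs_sum_le_sum_abs _ _
    _ ≤ ∑ d ∈ Icc 1 ⌊x⌋₊, x / 2 * (d : ℝ)⁻¹ := by
        refine sum_le_sum fun d _ => ?_
        rw [abs_mul]
        refine (mul_le_of_le_one_left (abs_nonneg _) (abs_moebius_cast_le_one d)).trans ?_
        exact (abs_triangularError_le (by positivity)).trans_eq (by ring)
    _ = x / 2 * harmonic ⌊x⌋₊ := by
        rw [← mul_sum, harmonic_eq_sum_Icc]
        push_cast
        rfl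
    _ ≤ x / 2 * (1 + log x) := by
        gcongr
        refine (harmonic_le_one_add_log _).trans ?_
        gcongr
        · exact_mod_cast Nat.floor_pos.mpr hx
        · exact Nat.floor_le (by positivity)

theorem abs_sum_Icc_totient_sub_le {x : ℝ} (hx : 1 ≤ x) :
    |∑ n ∈ Icc 1 ⌊x⌋₊, (n.totient : ℝ) - 3 * x ^ 2 / π ^ 2| ≤ x * (2 + log x) := by
  have hmain : |x ^ 2 / 2 * (∑ d ∈ Icc 1 ⌊x⌋₊, (μ d : ℝ) / d ^ 2 - 6 / π ^ 2)| ≤ x := by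
    have hxN : x < ⌊x⌋₊ + 1 := Nat.lt_floor_add_one x
    rw [abs_mul, abs_of_nonneg (by positivity)]
    calc x ^ 2 / 2 * _ ≤ x ^ 2 / 2 * (2 / (⌊x⌋₊ + 1)) := by
          gcongr; exact abs_sum_Icc_moebius_div_sq_sub_le _
      _ ≤ x := by
          rw [← mul_div_assoc, div_le_iff₀ (by positivity)]
          nlinarith
  rw [sum_Icc_totient_sub_eq]
  refine (abs_add_le _ _).trans ?_
  nlinarith [abs_sum_Icc_moebius_mul_triangularError_le hx, log_nonneg hx]

theorem totient_partial_sum_error :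
    ∃ C : ℝ, 0 < C ∧ ∀ x : ℝ, 2 ≤ x →
      |(∑ n ∈ Finset.Icc 1 ⌊x⌋₊, (Nat.totient n : ℝ)) - 3 * x ^ 2 / Real.pi ^ 2|
        ≤ C * x * Real.log x := by
  refine ⟨5, by norm_num, fun x hx => ?_⟩
  have hlog : 1 / 2 ≤ log x :=
    calc (1 : ℝ) / 2 ≤ log 2 := by linarith [log_two_gt_d9]
      _ ≤ log x := log_le_log two_pos hx
  calc _ ≤ x * (2 + log x) := abs_sum_Icc_totient_sub_le (by linarith)
    _ ≤ 5 * x * log x := by nlinarith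
end

section
/- The average order of Euler's totient function is 3n/π²: that is, (1/x)·∑_{n ≤ x} φ(n) is asymptotic to 3x/π² as x → ∞, i.e., the limit of (∑_{n ≤ x} φ(n))/(x²) as x → ∞ equals 3/π². -/
/-!
Since `φ = μ * id`, swapping the order of summation gives
`∑_{n ≤ N} φ(n) = ∑_{d ≤ N} μ(d) T(⌊N/d⌋)` with `T(k) = k(k+1)/2`. After division by `x²` the
`d`-th term tends to `μ(d)/(2d²)` and is bounded by `1/d²`, so dominated convergence gives the
limit `∑ μ(d)/(2d²) = 1/(2ζ(2)) = 3/π²`.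
-/

open Filter Finset ArithmeticFunction Topology
open scoped ArithmeticFunction.Moebius

theorem tsum_moebius_div_sq : ∑' d : ℕ, (μ d : ℝ) / (d : ℝ) ^ 2 = 6 / Real.pi ^ 2 := by
  have hs : 1 < (2 : ℂ).re := by norm_num
  have hL : LSeries (fun n ↦ (μ n : ℂ)) 2 = 6 / (Real.pi : ℂ) ^ 2 := by
    have h := LSeries_zeta_mul_Lseries_moebius hs
    rw [LSeries_zeta_eq_riemannZeta hs, riemannZeta_two] at h
    have hpi : (Real.pi : ℂ) ≠ 0 := Complex.ofReal_ne_zero.mpr Real.pi_ne_zero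
    field_simp at h ⊢
    linear_combination h
  have hterm (n : ℕ) :
      (((μ n : ℝ) / (n : ℝ) ^ 2 : ℝ) : ℂ) = LSeries.term (fun n ↦ (μ n : ℂ)) 2 n := by
    rcases eq_or_ne n 0 with rfl | hn
    · simp
    · simp [LSeries.term_of_ne_zero hn, Complex.cpow_ofNat]
  apply Complex.ofReal_injective
  rw [Complex.ofReal_tsum, tsum_congr hterm, ← LSeries, hL]
  norm_num

theorem moebius_mul_id_apply_eq_totient (n : ℕ) :
    ((μ : ArithmeticFunction ℝ) * (ArithmeticFunction.id : ArithmeticFunction ℝ)) n =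
      n.totient := by
  rcases Nat.eq_zero_or_pos n with rfl | hn
  · simp
  · have h := (sum_eq_iff_sum_mul_moebius_eq (f := fun n ↦ (n.totient : ℝ))
      (g := fun n ↦ (n : ℝ))).mp (fun n _ ↦ by exact_mod_cast Nat.sum_totient n) n hn
    simpa [mul_apply] using h

noncomputable def triangular (k : ℕ) : ℝ := k * (k + 1) / 2

theorem sum_Ioc_natCast_eq_triangular (k : ℕ) : ∑ m ∈ Ioc 0 k, (m : ℝ) = triangular k := by
  induction k with
  | zero => simp [triangular]
  | succ k ih =>
    rw [sum_Ioc_succ_top k.zero_le, ih, triangular, triangular]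
    push_cast
    ring

theorem triangular_nonneg (k : ℕ) : 0 ≤ triangular k := by
  unfold triangular
  positivity

theorem triangular_le_sq (k : ℕ) : triangular k ≤ (k : ℝ) ^ 2 := by
  rcases Nat.eq_zero_or_pos k with rfl | hk
  · simp [triangular]
  · have : (1 : ℝ) ≤ k := by exact_mod_cast hk
    unfold triangular
    nlinarith

theorem triangular_natFloor_div_le (x : ℝ) (d : ℕ) :
    triangular ⌊x / d⌋₊ / x ^ 2 ≤ 1 / (d : ℝ) ^ 2 := by
  set k := ⌊x / d⌋₊
  rcases Nat.eq_zero_or_pos k with hk | hk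
  · simp [hk, triangular]
  have hxd : (0 : ℝ) < x / d := Nat.pos_of_floor_pos hk
  have hd : (0 : ℝ) < d := Nat.cast_pos.mpr (Nat.pos_of_ne_zero fun h ↦ by simp [h] at hxd)
  have hx : 0 < x := (div_pos_iff_of_pos_right hd).mp hxd
  have hkx : (k : ℝ) * d ≤ x := (le_div_iff₀ hd).mp (Nat.floor_le hxd.le)
  calc triangular k / x ^ 2 ≤ (k : ℝ) ^ 2 / x ^ 2 := by gcongr; exact triangular_le_sq k
    _ ≤ 1 / (d : ℝ) ^ 2 := by
      rw [div_le_div_iff₀ (by positivity) (by positivity)]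
      nlinarith [pow_le_pow_left₀ (by positivity) hkx 2]

theorem tendsto_triangular_natFloor_div (d : ℕ) :
    Tendsto (fun x : ℝ ↦ triangular ⌊x / d⌋₊ / x ^ 2) atTop (𝓝 (((d : ℝ) ^ 2)⁻¹ / 2)) := by
  have hfloor : Tendsto (fun x : ℝ ↦ (⌊(d : ℝ)⁻¹ * x⌋₊ : ℝ) / x) atTop (𝓝 (d : ℝ)⁻¹) :=
    tendsto_nat_floor_mul_div_atTop (inv_nonneg.mpr d.cast_nonneg)
  have h := (hfloor.mul (hfloor.add tendsto_inv_atTop_zero)).div_const 2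
  rw [add_zero, ← sq, inv_pow] at h
  refine h.congr' ?_
  filter_upwards [eventually_ne_atTop 0] with x hx
  rw [triangular, div_eq_inv_mul x (d : ℝ)]
  field_simp

theorem tendsto_sum_mul_triangular_div_sq {a : ℕ → ℝ} {C : ℝ} (ha : ∀ d, |a d| ≤ C) :
    Tendsto (fun x : ℝ ↦ (∑ d ∈ Ioc 0 ⌊x⌋₊, a d * triangular (⌊x⌋₊ / d)) / x ^ 2) atTop
      (𝓝 ((∑' d : ℕ, a d / (d : ℝ) ^ 2) / 2)) := by
  have hbound : Summable fun d : ℕ ↦ C * (1 / (d : ℝ) ^ 2) :=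
    (Real.summable_one_div_nat_pow.mpr one_lt_two).mul_left C
  have hlim := tendsto_tsum_of_dominated_convergence hbound
    (fun d ↦ (tendsto_triangular_natFloor_div d).const_mul (a d))
    (Eventually.of_forall fun x d ↦ by
      have hT : 0 ≤ triangular ⌊x / d⌋₊ / x ^ 2 := div_nonneg (triangular_nonneg _) (sq_nonneg x)
      rw [norm_mul, Real.norm_eq_abs, Real.norm_of_nonneg hT]
      exact mul_le_mul (ha d) (triangular_natFloor_div_le x d) hT ((abs_nonneg _).trans (ha d)))
  have hsum (x : ℝ) : ∑' d : ℕ, a d * (triangular ⌊x / d⌋₊ / x ^ 2) =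
      (∑ d ∈ Ioc 0 ⌊x⌋₊, a d * triangular (⌊x⌋₊ / d)) / x ^ 2 := by
    simp_rw [Nat.floor_div_natCast, sum_div, mul_div_assoc]
    refine tsum_eq_sum fun d hd ↦ ?_
    have : ⌊x⌋₊ / d = 0 := by
      rw [mem_Ioc, not_and_or, not_lt, nonpos_iff_eq_zero, not_le] at hd
      rcases hd with rfl | hd
      · exact Nat.div_zero _
      · exact Nat.div_eq_of_lt hd
    simp [this, triangular]
  have hlimit :
      ∑' d : ℕ, a d * (((d : ℝ) ^ 2)⁻¹ / 2) = (∑' d : ℕ, a d / (d : ℝ) ^ 2) / 2 := by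
    rw [← tsum_div_const]
    simp_rw [mul_div_assoc', div_eq_mul_inv]
  simpa only [hsum, hlimit] using hlim

theorem sum_Ioc_totient (N : ℕ) :
    ∑ n ∈ Ioc 0 N, (n.totient : ℝ) = ∑ d ∈ Ioc 0 N, (μ d : ℝ) * triangular (N / d) := by
  simp_rw [← moebius_mul_id_apply_eq_totient, sum_Ioc_mul_eq_sum_sum, intCoe_apply,
    natCoe_apply, ArithmeticFunction.id_apply, sum_Ioc_natCast_eq_triangular]

open Filter in
theorem totient_average_order :
    Tendsto (fun x : ℝ => (∑ n ∈ Finset.Icc 1 ⌊x⌋₊, (Nat.totient n : ℝ)) / x ^ 2)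
      atTop (nhds (3 / Real.pi ^ 2)) := by
  have h := tendsto_sum_mul_triangular_div_sq (a := fun d ↦ (μ d : ℝ)) (C := 1)
    fun d ↦ by exact_mod_cast abs_moebius_le_one
  rw [tsum_moebius_div_sq] at h
  convert h using 2 with x
  · rw [← sum_Ioc_totient, ← Icc_add_one_left_eq_Ioc, zero_add]
  · ring
end

section
/- For every positive integer k, there exist integers a and b such that for all r, s with 1 ≤ r ≤ k and 1 ≤ s ≤ k, gcd(a+r, b+s) > 1; in other words, there is a k×k block of lattice points none of which is visible from the origin. -/
/-! Attach a distinct prime `p r s` to each point of the block `[1, k] × [1, k]`. By the Chinese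
remainder theorem there are `A, B ∈ ℕ` with `p r s ∣ A + r` and `p r s ∣ B + s` for all `r, s`
simultaneously, and then `p r s` divides `gcd (A + r) (B + s)`. -/

open Function

theorem exists_injective_prime (ι : Type*) [Countable ι] :
    ∃ p : ι → ℕ, (∀ i, (p i).Prime) ∧ Injective p := by
  obtain ⟨e, he⟩ := Countable.exists_injective_nat ι
  exact ⟨fun i => Nat.nth Nat.Prime (e i), fun i => Nat.prime_nth_prime _,
    (Nat.nth_injective Nat.infinite_setOfPred_prime).comp he⟩

theorem Nat.exists_dvd_add_of_pairwise_coprime {ι : Type*} {m : ι → ℕ} {t : Finset ι}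
    (hm : ∀ i ∈ t, m i ≠ 0) (hco : Set.Pairwise t (Coprime on m)) (f : ι → ℕ) :
    ∃ A : ℕ, ∀ i ∈ t, m i ∣ A + f i := by
  obtain ⟨A, hA⟩ := chineseRemainderOfFinset (fun i => f i * (m i - 1)) m t hm hco
  refine ⟨A, fun i hi => (modEq_zero_iff_dvd).mp ?_⟩
  calc A + f i ≡ f i * (m i - 1) + f i [MOD m i] := (hA i hi).add_right _
    _ = f i * m i := by rw [← Nat.mul_add_one, Nat.sub_one_add_one (hm i hi)]
    _ ≡ 0 [MOD m i] := (modEq_zero_iff_dvd).mpr (dvd_mul_left _ _)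

theorem Nat.exists_dvd_add_of_injective_prime {ι : Type*} {p : ι → ℕ} (hp : ∀ i, (p i).Prime)
    (hinj : Injective p) (t : Finset ι) (f : ι → ℕ) : ∃ A : ℕ, ∀ i ∈ t, p i ∣ A + f i :=
  exists_dvd_add_of_pairwise_coprime (fun i _ => (hp i).ne_zero)
    (fun i _ j _ hij => (coprime_primes (hp i) (hp j)).mpr (hinj.ne hij)) f

theorem Nat.one_lt_gcd_of_prime_dvd {p m n : ℕ} (hp : p.Prime) (hm : 0 < m) (hpm : p ∣ m)
    (hpn : p ∣ n) : 1 < gcd m n :=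
  hp.one_lt.trans_le (le_of_dvd (gcd_pos_of_pos_left n hm) (dvd_gcd hpm hpn))

theorem hidden_forest_general (k : ℕ) :
    ∃ a b : ℤ, ∀ r s : ℤ, 1 ≤ r → r ≤ k → 1 ≤ s → s ≤ k →
      1 < Int.gcd (a + r) (b + s) := by
  obtain ⟨p, hp, hinj⟩ := exists_injective_prime (ℕ × ℕ)
  set block := Finset.Icc 1 k ×ˢ Finset.Icc 1 k
  obtain ⟨A, hA⟩ := Nat.exists_dvd_add_of_injective_prime hp hinj block Prod.fst
  obtain ⟨B, hB⟩ := Nat.exists_dvd_add_of_injective_prime hp hinj block Prod.snd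
  refine ⟨A, B, fun r s hr1 hrk hs1 hsk => ?_⟩
  lift r to ℕ using by omega
  lift s to ℕ using by omega
  have hrs : (r, s) ∈ block := by simp only [block, Finset.mem_product, Finset.mem_Icc]; omega
  rw [← Nat.cast_add, ← Nat.cast_add, Int.gcd_natCast_natCast]
  exact Nat.one_lt_gcd_of_prime_dvd (hp (r, s)) (by omega) (hA _ hrs) (hB _ hrs)

/-- Hidden forest theorem: arbitrarily large square blocks of lattice points,
none of which is visible from the origin. -/
theorem hidden_forest (k : ℕ) (hk : 0 < k) :
    ∃ a b : ℤ, ∀ r s : ℤ, 1 ≤ r → r ≤ k → 1 ≤ s → s ≤ k →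
      1 < Int.gcd (a + r) (b + s) :=
  hidden_forest_general k
end

section
/- For sufficiently large n, given any r = ⌊log n / (2 log log n)⌋ + 1 lattice points in the grid {0,…,n}², there exists a lattice point (x₀,y₀) in the same grid, distinct from all of them, that is not visible from any of the given points. Consequently, any set B of lattice points in the n×n grid from which every grid point is visible satisfies |B| > log n / (2 log log n). -/
/-!
Abbott's argument: choose distinct primes `p₀, …, p_R` with `(R + 2) p₀ ⋯ p_R ≤ n`. By the
Chinese remainder theorem there is a point `(x₀, y₀)` with both coordinates in `[0, p₀ ⋯ p_R)`
such that `(x₀, y₀) ≡ Pᵢ (mod pᵢ)` for each of the given points `Pᵢ`; then `pᵢ` divides both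
coordinate differences, so `Pᵢ` does not see `(x₀, y₀)`. Of the `R + 2` translates of `(x₀, y₀)`
by multiples of `p₀ ⋯ p_R` along the first axis, all in the grid, one differs from every `Pᵢ`.
The primes are taken up to `x ≈ (log n) / log 4`: their product is at most `4 ^ x`, and
Chebyshev's bound `π x ≥ (x log 2 - log (x + 1)) / log x` supplies enough of them because
`log x ≈ log log n - log log 4` is slightly smaller than `log log n`.
-/

open Real Finset Function Filter

theorem Int.gcd_ne_one_of_dvd_of_dvd {p : ℕ} (hp : p.Prime) {a b : ℤ}
    (ha : (p : ℤ) ∣ a) (hb : (p : ℤ) ∣ b) : Int.gcd a b ≠ 1 := fun h ↦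
  (Nat.prime_iff_prime_int.mp hp).not_isUnit
    ((Int.isCoprime_iff_gcd_eq_one.mpr h).isUnit_of_dvd' ha hb)

theorem Int.exists_nonneg_lt_forall_dvd_sub {ι : Type*} [Finite ι] {m : ι → ℕ}
    (hm : Pairwise (Nat.Coprime on m)) {M : ℕ} (hM : 0 < M) (hmM : ∀ i, m i ∣ M) (a : ι → ℤ) :
    ∃ z : ℤ, 0 ≤ z ∧ z < M ∧ ∀ i, (m i : ℤ) ∣ z - a i := by
  have hI : Pairwise (IsCoprime on fun i ↦ Ideal.span {(m i : ℤ)}) := fun i j hij ↦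
    (Ideal.isCoprime_span_singleton_iff _ _).mpr (hm hij).isCoprime
  obtain ⟨z, hz⟩ := Ideal.exists_forall_sub_mem_ideal hI a
  refine ⟨z % M, Int.emod_nonneg z (by omega), Int.emod_lt_of_pos z (by omega), fun i ↦ ?_⟩
  have hzM : z % M ≡ z [ZMOD m i] := Int.emod_emod_of_dvd z (Int.natCast_dvd_natCast.mpr (hmM i))
  have hza : a i ≡ z [ZMOD m i] := Int.modEq_iff_dvd.mpr (Ideal.mem_span_singleton.mp (hz i))
  exact Int.modEq_iff_dvd.mp (hza.trans hzM.symm)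

theorem exists_mem_grid_notMem_forall_gcd_ne_one {n : ℕ} (T : Finset (ℤ × ℤ)) {S : Finset ℕ}
    (hS : ∀ p ∈ S, p.Prime) (hTS : #T ≤ #S) (hn : (#S + 1) * ∏ p ∈ S, p ≤ n) :
    ∃ q : ℤ × ℤ, (0 ≤ q.1 ∧ q.1 ≤ n ∧ 0 ≤ q.2 ∧ q.2 ≤ n) ∧ q ∉ T ∧
      ∀ t ∈ T, Int.gcd (q.1 - t.1) (q.2 - t.2) ≠ 1 := by
  obtain ⟨f⟩ : Nonempty (T ↪ S) := Embedding.nonempty_of_card_le (by simpa using hTS)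
  set M := ∏ p ∈ S, p
  have hprime (t : T) : (f t : ℕ).Prime := hS _ (f t).2
  have hcop : Pairwise (Nat.Coprime on fun t ↦ (f t : ℕ)) := fun s t hst ↦
    (Nat.coprime_primes (hprime s) (hprime t)).mpr fun h ↦ hst (f.injective (Subtype.ext h))
  have hM : 0 < M := prod_pos fun p hp ↦ (hS p hp).pos
  have hdvd (t : T) : (f t : ℕ) ∣ M := dvd_prod_of_mem _ (f t).2
  obtain ⟨x₀, hx₀, hx₀M, hx⟩ :=
    Int.exists_nonneg_lt_forall_dvd_sub hcop hM hdvd fun t ↦ (t : ℤ × ℤ).1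
  obtain ⟨y₀, hy₀, hy₀M, hy⟩ :=
    Int.exists_nonneg_lt_forall_dvd_sub hcop hM hdvd fun t ↦ (t : ℤ × ℤ).2
  let shift (j : ℕ) : ℤ × ℤ := (x₀ + j * M, y₀)
  have hshift : Injective shift := fun i j h ↦ by
    have := congrArg Prod.fst h
    simp only [shift, add_right_inj, mul_left_inj' (show (M : ℤ) ≠ 0 by omega)] at this
    exact_mod_cast this
  obtain ⟨q, hq, hqT⟩ : ∃ q ∈ (range (#S + 1)).image shift, q ∉ T :=
    exists_mem_notMem_of_card_lt_card (by rw [card_image_of_injective _ hshift, card_range]; omega)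
  obtain ⟨j, hj, rfl⟩ := mem_image.mp hq
  have hjS : (j : ℤ) ≤ #S := by have := mem_range.mp hj; omega
  have hnZ : ((#S : ℤ) + 1) * M ≤ n := by exact_mod_cast hn
  refine ⟨_, ⟨by positivity, by nlinarith, hy₀, by nlinarith⟩, hqT, fun t ht ↦ ?_⟩
  refine Int.gcd_ne_one_of_dvd_of_dvd (hprime ⟨t, ht⟩) ?_ (hy ⟨t, ht⟩)
  rw [show x₀ + j * M - t.1 = x₀ - t.1 + j * M by ring]
  exact dvd_add (hx ⟨t, ht⟩) (dvd_mul_of_dvd_right (Int.natCast_dvd_natCast.mpr (hdvd _)) _)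

theorem exists_primes_card_eq_prod_le_four_pow {k x : ℕ} (h : k ≤ x.primeCounting) :
    ∃ S : Finset ℕ, (∀ p ∈ S, p.Prime) ∧ #S = k ∧ ∏ p ∈ S, p ≤ 4 ^ x := by
  obtain ⟨S, hS, hcard⟩ :=
    exists_subset_card_eq (s := x.primesLE) (n := k) (by rwa [Nat.primesLE_card_eq_primeCounting])
  refine ⟨S, fun p hp ↦ Nat.prime_of_mem_primesLE (hS hp), hcard, ?_⟩
  calc ∏ p ∈ S, p ≤ ∏ p ∈ x.primesLE, p :=
        prod_le_prod_of_subset_of_one_le' hS fun p hp _ ↦ (Nat.one_lt_of_mem_primesLE hp).le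
    _ = primorial x := (primorial_eq_prod_primesLE x).symm
    _ ≤ 4 ^ x := primorial_le_four_pow x

theorem exists_primeCounting_ge_and_log_add_le {ℓ : ℝ} (ht : 2 ≤ log ℓ) (hℓ : 32 * log ℓ ^ 2 ≤ ℓ) :
    ∃ x : ℕ, ℓ / (2 * log ℓ) + 1 ≤ x.primeCounting ∧
      log (ℓ / (2 * log ℓ) + 2) + x * log 4 ≤ ℓ := by
  set t := log ℓ
  have hlog4 : log 4 = 2 * log 2 := by
    rw [show (4 : ℝ) = 2 ^ 2 by norm_num, log_pow, Nat.cast_ofNat]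
  have hlog2_gt := log_two_gt_d9
  have hlog2_lt := log_two_lt_d9
  have hℓt : 64 * t ≤ ℓ := by nlinarith
  -- the largest `x` with `ℓ * 4 ^ x ≤ exp ℓ`, leaving room for the factor `ℓ / (2 * t) + 2 ≤ ℓ`
  set x := ⌊(ℓ - t) / log 4⌋₊
  have hx_le : x * log 4 ≤ ℓ - t :=
    (le_div_iff₀ (by linarith)).mp (Nat.floor_le (div_nonneg (by linarith) (by linarith)))
  have hx_gt : ℓ - t - log 4 < x * log 4 := by
    have := Nat.lt_floor_add_one ((ℓ - t) / log 4)
    rw [div_lt_iff₀ (by linarith)] at this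
    linarith
  have hx_gt' : ℓ - t - 2 * log 2 < 2 * (x * log 2) := by rw [hlog4] at hx_gt; linarith
  have hx_two : (2 : ℝ) ≤ x := by nlinarith
  have htpos : 0 < 2 * t := by linarith
  have hlogx_pos : 0 < log x := log_pos (by linarith)
  -- `log x ≤ t - log (log 4)`, and `log (log 4) ≥ 1 - 1 / log 4 ≥ 1 / 4`
  have hlogx : log x ≤ t - 1 / 4 := by
    have hlog_log4 : 1 / 4 ≤ log (log 4) := by
      have := one_sub_inv_le_log_of_pos (x := log 4) (by linarith)
      have : (log 4)⁻¹ ≤ 3 / 4 := by rw [inv_le_comm₀ (by linarith) (by norm_num)]; linarith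
      linarith
    have : log x ≤ log (ℓ / log 4) :=
      log_le_log (by linarith) ((le_div_iff₀ (by linarith)).mpr (by linarith))
    rw [log_div (by linarith) (by linarith)] at this
    linarith
  have hlogx1 : log (x + 1) ≤ t := log_le_log (by linarith) (by nlinarith)
  refine ⟨x, ?_, ?_⟩
  · calc ℓ / (2 * t) + 1 ≤ ((ℓ - 3 * t) / 2 - log 2) / (t - 1 / 4) := by
          rw [div_add_one htpos.ne', div_le_div_iff₀ htpos (by linarith)]
          nlinarith
      _ ≤ (x * log 2 - log (x + 1)) / log x :=
          div_le_div₀ (by linarith) (by linarith) hlogx_pos hlogx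
      _ ≤ x.primeCounting := Chebyshev.pi_ge x
  · have : log (ℓ / (2 * t) + 2) ≤ t := by
      refine log_le_log (add_pos (div_pos (by linarith) htpos) two_pos) ?_
      have : ℓ / (2 * t) ≤ ℓ / 4 :=
        div_le_div_of_nonneg_left (by linarith) (by norm_num) (by linarith)
      linarith
    linarith

theorem eventually_exists_primeCounting_ge_and_mul_four_pow_le :
    ∀ᶠ n : ℕ in atTop, ∃ x : ℕ, ⌊log n / (2 * log (log n))⌋₊ + 1 ≤ x.primeCounting ∧
      (⌊log n / (2 * log (log n))⌋₊ + 2) * 4 ^ x ≤ n := by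
  have hlarge : ∀ᶠ ℓ : ℝ in atTop, 2 ≤ log ℓ ∧ 32 * log ℓ ^ 2 ≤ ℓ := by
    filter_upwards [tendsto_log_atTop.eventually_ge_atTop 2, eventually_ge_atTop 0,
      (isLittleO_pow_log_id_atTop (n := 2)).bound (show (0 : ℝ) < 1 / 32 by norm_num)]
      with ℓ ht hℓ hbound
    rw [norm_pow, Real.norm_eq_abs, sq_abs, id, Real.norm_of_nonneg hℓ] at hbound
    exact ⟨ht, by linarith⟩
  filter_upwards [(tendsto_log_atTop.comp tendsto_natCast_atTop_atTop).eventually hlarge,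
    eventually_gt_atTop 0] with n ⟨ht, hℓ⟩ hn
  rw [comp_apply] at ht hℓ
  obtain ⟨x, hπ, hsize⟩ := exists_primeCounting_ge_and_log_add_le ht hℓ
  set L := log n / (2 * log (log n))
  have hL : (⌊L⌋₊ : ℝ) ≤ L := Nat.floor_le (div_nonneg (log_natCast_nonneg n) (by linarith))
  refine ⟨x, by exact_mod_cast (by linarith : (⌊L⌋₊ + 1 : ℝ) ≤ x.primeCounting), ?_⟩
  have hL2 : 0 < L + 2 := by linarith [(Nat.cast_nonneg ⌊L⌋₊ : (0 : ℝ) ≤ _)]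
  have : ((⌊L⌋₊ + 2) * 4 ^ x : ℝ) ≤ n := calc
    _ ≤ (L + 2) * 4 ^ x := by gcongr
    _ = exp (log (L + 2) + x * log 4) := by
        rw [exp_add, exp_log hL2, ← log_pow, exp_log (by positivity)]
    _ ≤ exp (log n) := exp_le_exp.mpr hsize
    _ = n := exp_log (by exact_mod_cast hn)
  exact_mod_cast this

/-- Lower bound in Abbott's theorem. -/
theorem abbott_lower_bound :
    ∃ N : ℕ, ∀ n : ℕ, N < n →
      (∀ P : Fin (⌊Real.log n / (2 * Real.log (Real.log n))⌋₊ + 1) → ℤ × ℤ,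
          (∀ i, 0 ≤ (P i).1 ∧ (P i).1 ≤ n ∧ 0 ≤ (P i).2 ∧ (P i).2 ≤ n) →
          ∃ q : ℤ × ℤ, (0 ≤ q.1 ∧ q.1 ≤ n ∧ 0 ≤ q.2 ∧ q.2 ≤ n) ∧
            (∀ i, q ≠ P i) ∧
            ∀ i, Int.gcd (q.1 - (P i).1) (q.2 - (P i).2) ≠ 1) ∧
      ∀ B : Finset (ℤ × ℤ),
        (∀ p ∈ B, 0 ≤ p.1 ∧ p.1 ≤ n ∧ 0 ≤ p.2 ∧ p.2 ≤ n) →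
        (∀ q : ℤ × ℤ, 0 ≤ q.1 → q.1 ≤ n → 0 ≤ q.2 → q.2 ≤ n →
          ∃ p ∈ B, q ≠ p ∧ Int.gcd (q.1 - p.1) (q.2 - p.2) = 1) →
        Real.log n / (2 * Real.log (Real.log n)) < (B.card : ℝ) := by
  obtain ⟨N, hN⟩ := eventually_atTop.mp eventually_exists_primeCounting_ge_and_mul_four_pow_le
  refine ⟨N, fun n hn ↦ ?_⟩
  set R := ⌊log n / (2 * log (log n))⌋₊
  obtain ⟨x, hπ, hsize⟩ := hN n hn.le
  obtain ⟨S, hS, hcard, hprod⟩ := exists_primes_card_eq_prod_le_four_pow hπ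
  have hSn : (#S + 1) * ∏ p ∈ S, p ≤ n :=
    calc (#S + 1) * ∏ p ∈ S, p ≤ (R + 2) * 4 ^ x := by rw [hcard]; gcongr
      _ ≤ n := hsize
  refine ⟨fun P _ ↦ ?_, fun B _ hvisible ↦ ?_⟩
  · have hP (i) : P i ∈ univ.image P := mem_image_of_mem P (mem_univ i)
    obtain ⟨q, hq, hqP, hgcd⟩ := exists_mem_grid_notMem_forall_gcd_ne_one (univ.image P) hS
      (by simpa [hcard] using card_image_le (s := univ) (f := P)) hSn
    exact ⟨q, hq, fun i h ↦ hqP (h ▸ hP i), fun i ↦ hgcd _ (hP i)⟩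
  · by_contra! hB
    obtain ⟨q, ⟨hq₁, hq₁n, hq₂, hq₂n⟩, -, hgcd⟩ :=
      exists_mem_grid_notMem_forall_gcd_ne_one B hS (hcard ▸ (Nat.le_floor hB).trans R.le_succ) hSn
    obtain ⟨p, hp, -, hvis⟩ := hvisible q hq₁ hq₁n hq₂ hq₂n
    exact hgcd p hp hvis
end
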